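/- Let m be a positive integer. Let R ∈ ℝ^{(m+1)×(m+1)} be upper triangular and invertible, with leading m×m principal submatrix R_m and ρ = R_{m+1,m+1}. Let Ĥ ∈ ℝ^{(m+1)×m} be a matrix whose last row equals h^{(h)}·e_mᵀ for a scalar h^{(h)} ∈ ℝ, and let H̄ = R·Ĥ·R_m⁻¹. Then H̄_{m+1,m} = 0 if and only if h^{(h)} = 0. (In particular, the Arnoldi process terminates with a happy breakdown exactly when the Hessenberg process does.) -/

import Mathlib

/-!
Since `R` is upper triangular, the last row of `R * Ĥ` is `ρ` times the last row of `Ĥ`, namely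
`ρ h⁽ʰ⁾ e_mᵀ`. Hence `H̄_{m+1,m} = ρ h⁽ʰ⁾ (R_m⁻¹)_{m,m}`, and both `ρ` and
`(R_m⁻¹)_{m,m} = (R_m)_{m,m}⁻¹` are nonzero because an invertible triangular matrix has
invertible diagonal entries.
-/

namespace Matrix

variable {n R : Type*}

theorem IsUpperTriangular.submatrix_of_strictMono {m : Type*} [Preorder m] [Preorder n] [Zero R]
    {M : Matrix n n R} (hM : M.IsUpperTriangular) {f : m → n} (hf : StrictMono f) :
    (M.submatrix f f).IsUpperTriangular :=
  fun _ _ hij => hM (hf hij)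

section CommRing

variable [Fintype n] [LinearOrder n] [CommRing R] {M : Matrix n n R}

theorem IsUpperTriangular.isUnit_iff (hM : M.IsUpperTriangular) :
    IsUnit M ↔ ∀ i, IsUnit (M i i) := by
  rw [isUnit_iff_isUnit_det, det_of_isUpperTriangular hM, IsUnit.prod_univ_iff]

theorem IsUpperTriangular.inv_apply_self_mul (hM : M.IsUpperTriangular) (hu : IsUnit M) (i : n) :
    M⁻¹ i i * M i i = 1 := by
  have : Invertible M := hu.invertible
  have hMinv : M⁻¹.IsUpperTriangular := blockTriangular_inv_of_blockTriangular hM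
  have hdiag : (M⁻¹ * M) i i = 1 := by rw [inv_mul_of_invertible, one_apply_eq]
  rw [mul_apply, Finset.sum_eq_single i] at hdiag
  · exact hdiag
  · intro k _ hki
    rcases hki.lt_or_gt with hlt | hgt
    · rw [hMinv hlt, zero_mul]
    · rw [hM hgt, mul_zero]
  · exact fun hi => absurd (Finset.mem_univ i) hi

end CommRing

theorem IsUpperTriangular.mul_apply_last [NonUnitalNonAssocSemiring R] {k : ℕ} {ι : Type*}
    {M : Matrix (Fin (k + 1)) (Fin (k + 1)) R} (hM : M.IsUpperTriangular)
    (A : Matrix (Fin (k + 1)) ι R) (j : ι) :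
    (M * A) (Fin.last k) j = M (Fin.last k) (Fin.last k) * A (Fin.last k) j := by
  rw [mul_apply, Finset.sum_eq_single (Fin.last k)]
  · intro i _ hi
    have hzero : M (Fin.last k) i = 0 := hM (Fin.lt_last_iff_ne_last.2 hi)
    rw [hzero, zero_mul]
  · exact fun h => absurd (Finset.mem_univ _) h

theorem mul_apply_of_row_eq_single [Fintype n] [DecidableEq n] [NonAssocSemiring R]
    {m ι : Type*} {A : Matrix m n R} {B : Matrix n ι R} {i : m} {l : n} {c : R}
    (hrow : ∀ k, A i k = c * (Pi.single l (1 : R) : n → R) k) (j : ι) :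
    (A * B) i j = c * B l j := by
  simp only [mul_apply, hrow, Pi.single_apply, mul_ite, mul_one, mul_zero, ite_mul, zero_mul,
    Finset.sum_ite_eq', Finset.mem_univ, if_true]

end Matrix

open Matrix in
/-- with `R ∈ ℝ^{(m+1)×(m+1)}` upper triangular invertible, `Rm` its
leading principal submatrix, `Ĥ ∈ ℝ^{(m+1)×m}` with last row `h⁽ʰ⁾·e_mᵀ`, and
`H̄ = R·Ĥ·Rm⁻¹`, one has `H̄_{m+1,m} = 0` if and only if `h⁽ʰ⁾ = 0`
(happy breakdowns of the Arnoldi and Hessenberg processes coincide). -/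
theorem arnoldi_hessenberg_breakdown_equivalence
    (m : ℕ) (hm : 0 < m)
    (R : Matrix (Fin (m + 1)) (Fin (m + 1)) ℝ)
    (htri : ∀ i j : Fin (m + 1), (j : ℕ) < (i : ℕ) → R i j = 0)
    (hinv : IsUnit R)
    (Rm : Matrix (Fin m) (Fin m) ℝ)
    (hRm : Rm = R.submatrix Fin.castSucc Fin.castSucc)
    (Hhat : Matrix (Fin (m + 1)) (Fin m) ℝ) (hh : ℝ)
    (hrow : ∀ j : Fin m,
      Hhat (Fin.last m) j = hh * (Pi.single (⟨m - 1, by omega⟩ : Fin m) (1 : ℝ) : Fin m → ℝ) j)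
    (Hbar : Matrix (Fin (m + 1)) (Fin m) ℝ)
    (hHbar : Hbar = R * Hhat * Rm⁻¹) :
    Hbar (Fin.last m) ⟨m - 1, by omega⟩ = 0 ↔ hh = 0 := by
  set l : Fin m := ⟨m - 1, by omega⟩
  have hR : R.IsUpperTriangular := fun i j hij => htri i j hij
  have hRm_tri : Rm.IsUpperTriangular := hRm ▸ hR.submatrix_of_strictMono Fin.strictMono_castSucc
  have hR_diag := hR.isUnit_iff.1 hinv
  have hRm_unit : IsUnit Rm := hRm_tri.isUnit_iff.2 fun i => hRm ▸ hR_diag i.castSucc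
  have hentry : Hbar (Fin.last m) l = R (Fin.last m) (Fin.last m) * (hh * Rm⁻¹ l l) := by
    rw [hHbar, Matrix.mul_assoc, hR.mul_apply_last, mul_apply_of_row_eq_single hrow]
  have hinv_diag : Rm⁻¹ l l ≠ 0 := left_ne_zero_of_mul_eq_one (hRm_tri.inv_apply_self_mul hRm_unit l)
  simp [hentry, (hR_diag _).ne_zero, hinv_diag]
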